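/- For every integer n ≥ 0 and fixed integer j with |j| ≤ 2n, μ_{2n+4}(j) = (3+4i) · [(n+1)(n+2)(n+1/2)(n+3/2)(n+7/4)] / [(n−j/2+2)(n+j/2+2)(n−j/2+3/2)(n+j/2+3/2)(n+3/4)] · μ_{2n}(j) − (2+4i) · [(n+2)(n+3/2)(n+5/4) · (n² + (3/20)j² + (5/2)n + 51/40 + i((4/20)j² − 1/20))] / [(n−j/2+2)(n+j/2+2)(n−j/2+3/2)(n+j/2+3/2)(n+3/4)] · μ_{2n+2}(j). Similarly, for every integer n ≥ 0 and fixed integer j with |j| ≤ 2n+1, μ_{2n+5}(j) = (3+4i) · [(n+1)(n+2)(n+3/2)(n+5/2)(n+9/4)] / [(n−j/2+2)(n+j/2+2)(n−j/2+5/2)(n+j/2+5/2)(n+5/4)] · μ_{2n+1}(j) − (2+4i) · [(n+2)(n+5/2)(n+7/4) · (n² + (3/20)j² + (7/2)n + 111/40 + i((4/20)j² − 1/20))] / [(n−j/2+2)(n+j/2+2)(n−j/2+5/2)(n+j/2+5/2)(n+5/4)] · μ_{2n+3}(j). -/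

import Mathlib

open Complex

/-- The complex amplitude `μ_ℓ(j)`. -/
noncomputable def amp (ℓ : ℕ) (j : ℤ) : ℂ :=
  if j.natAbs ≤ ℓ then
    ∑ r ∈ Finset.range (ℓ - j.natAbs + 1),
      if 2 ∣ ((ℓ : ℤ) - r + j) then
        (ℓ.choose r : ℂ) * ((ℓ - r).choose ((((ℓ : ℤ) - r + j) / 2).toNat) : ℂ) *
          (Complex.I / 2) ^ (ℓ - r) * (1 - Complex.I) ^ r
      else 0
  else 0

open Polynomial Finset

/-!
`μ_ℓ(j)` is the coefficient of `X^(ℓ+j)` in `P^ℓ` for `P = i/2 + (1 - i) X + (i/2) X²`; write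
`w_ℓ(j)` for this coefficient when `P = a + b X + c X²` is arbitrary. Besides
`P^(ℓ+1) = P · P^ℓ`, comparing coefficients in `P · (P^ℓ)' = ℓ P' · P^ℓ` gives a three-term
relation in `j`. Together they yield the three-term recurrence
  `((ℓ+2)² - j²) w_{ℓ+2} = b (ℓ+2)(2ℓ+3) w_{ℓ+1} - (b² - 4ac)(ℓ+1)(ℓ+2) w_ℓ`,
and eliminating `w_{ℓ+1}` and `w_{ℓ+3}` from three consecutive instances gives a recurrence of
step two. For the walk `b² - 4ac = 1 - 2i`, whose square is `-(3 + 4i)`; the two halves of the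
theorem are the cases `ℓ = 2n` and `ℓ = 2n + 1`.
-/

namespace Polynomial

variable {R : Type*}

section Semiring

variable [Semiring R]

def intCoeff (q : R[X]) (t : ℤ) : R :=
  if 0 ≤ t then q.coeff t.toNat else 0

lemma intCoeff_add (q r : R[X]) (t : ℤ) : (q + r).intCoeff t = q.intCoeff t + r.intCoeff t := by
  unfold intCoeff; split_ifs <;> simp

lemma intCoeff_C_mul (c : R) (q : R[X]) (t : ℤ) : (C c * q).intCoeff t = c * q.intCoeff t := by
  unfold intCoeff; split_ifs <;> simp

lemma intCoeff_X_mul (q : R[X]) (t : ℤ) : (X * q).intCoeff t = q.intCoeff (t - 1) := by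
  unfold intCoeff
  rcases lt_trichotomy t 0 with h | rfl | h
  · rw [if_neg (by omega), if_neg (by omega)]
  · simp
  · rw [if_pos h.le, if_pos (by omega), show t.toNat = (t - 1).toNat + 1 by omega, coeff_X_mul]

end Semiring

lemma intCoeff_derivative [CommRing R] (q : R[X]) (t : ℤ) :
    (derivative q).intCoeff t = ((t : R) + 1) * q.intCoeff (t + 1) := by
  unfold intCoeff
  rcases lt_trichotomy t (-1) with h | rfl | h
  · rw [if_neg (by omega), if_neg (by omega), mul_zero]
  · simp
  · rw [if_pos (by omega), if_pos (by omega), coeff_derivative,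
      show (t + 1).toNat = t.toNat + 1 by omega, mul_comm]
    congr 2
    rw [← Int.cast_natCast, Int.toNat_of_nonneg (by omega)]

section CommSemiring

variable [CommSemiring R]

lemma intCoeff_trinomial_mul (a b c : R) (q : R[X]) (t : ℤ) :
    (trinomial 0 1 2 a b c * q).intCoeff t =
      a * q.intCoeff t + b * q.intCoeff (t - 1) + c * q.intCoeff (t - 2) := by
  have h : trinomial 0 1 2 a b c * q = C a * q + C b * (X * q) + C c * (X * (X * q)) := by
    rw [trinomial_def]; ring
  rw [h, intCoeff_add, intCoeff_add, intCoeff_C_mul, intCoeff_C_mul, intCoeff_C_mul,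
    intCoeff_X_mul, intCoeff_X_mul, intCoeff_X_mul, sub_sub, one_add_one_eq_two]

lemma mul_derivative_pow (p : R[X]) (n : ℕ) :
    p * derivative (p ^ n) = C (n : R) * derivative p * p ^ n := by
  rcases n with _ | n
  · simp
  · rw [derivative_pow_succ]; push_cast; ring

lemma derivative_trinomial (a b c : R) :
    derivative (trinomial 0 1 2 a b c) = C b + C (2 * c) * X := by
  rw [trinomial_def, mul_comm 2 c]
  simp only [derivative_add, derivative_C_mul_X_pow]
  norm_num

lemma coeff_one_add_X_sq_pow (k m : ℕ) :
    ((1 + X ^ 2 : R[X]) ^ k).coeff m = if 2 ∣ m then (k.choose (m / 2) : R) else 0 := by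
  rw [show (1 + X ^ 2 : R[X]) = expand R 2 (1 + X) by simp, ← map_pow,
    coeff_expand two_pos, coeff_one_add_X_pow]

lemma coeff_trinomial_symm_pow (a b : R) (ℓ N : ℕ) :
    (trinomial 0 1 2 a b a ^ ℓ).coeff N =
      ∑ r ∈ range (ℓ + 1), if r ≤ N ∧ 2 ∣ N - r then
        (ℓ.choose r : R) * ((ℓ - r).choose ((N - r) / 2) : R) * a ^ (ℓ - r) * b ^ r else 0 := by
  rw [show trinomial 0 1 2 a b a = C b * X + C a * (1 + X ^ 2) by rw [trinomial_def]; ring,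
    add_pow, finsetSum_coeff]
  refine sum_congr rfl fun r _ => ?_
  rw [mul_pow, mul_pow, ← C_pow, ← C_pow, ← C_eq_natCast, coeff_mul_C,
    show C (b ^ r) * X ^ r * (C (a ^ (ℓ - r)) * (1 + X ^ 2) ^ (ℓ - r)) =
      C (a ^ (ℓ - r) * b ^ r) * (X ^ r * (1 + X ^ 2) ^ (ℓ - r)) by rw [C_mul]; ring,
    coeff_C_mul, coeff_X_pow_mul', coeff_one_add_X_sq_pow]
  by_cases hr : r ≤ N <;> by_cases h2 : 2 ∣ N - r <;> simp [hr, h2]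
  ring

end CommSemiring

end Polynomial

section PathWeight

variable {R : Type*} [CommRing R]

/-- The total weight of the paths of length `ℓ` from `0` to `j` with weights `a`, `b`, `c` for the
steps `-1`, `0`, `+1`; the shift by `ℓ` makes all exponents nonnegative. -/
noncomputable def pathWeight (a b c : R) (ℓ : ℕ) (j : ℤ) : R :=
  (trinomial 0 1 2 a b c ^ ℓ).intCoeff (ℓ + j)

variable (a b c : R)

lemma pathWeight_succ (ℓ : ℕ) (j : ℤ) :
    pathWeight a b c (ℓ + 1) j =
      a * pathWeight a b c ℓ (j + 1) + b * pathWeight a b c ℓ j +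
        c * pathWeight a b c ℓ (j - 1) := by
  rw [pathWeight, pow_succ', intCoeff_trinomial_mul,
    show ((ℓ + 1 : ℕ) : ℤ) + j - 1 = ℓ + j by push_cast; ring,
    show ((ℓ + 1 : ℕ) : ℤ) + j - 2 = ℓ + (j - 1) by push_cast; ring,
    show ((ℓ + 1 : ℕ) : ℤ) + j = ℓ + (j + 1) by push_cast; ring]
  rfl

lemma pathWeight_contiguous (ℓ : ℕ) (j : ℤ) :
    a * ((ℓ : R) + j + 1) * pathWeight a b c ℓ (j + 1) + b * j * pathWeight a b c ℓ j +
      c * ((j : R) - ℓ - 1) * pathWeight a b c ℓ (j - 1) = 0 := by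
  have h := congrArg (intCoeff · (ℓ + j)) (mul_derivative_pow (trinomial 0 1 2 a b c) ℓ)
  simp only [derivative_trinomial, intCoeff_trinomial_mul, intCoeff_derivative, mul_add, add_mul,
    mul_assoc, intCoeff_add, intCoeff_C_mul, intCoeff_X_mul] at h
  rw [show (ℓ : ℤ) + j - 1 + 1 = ℓ + j by ring, show (ℓ : ℤ) + j - 2 + 1 = ℓ + (j - 1) by ring,
    show (ℓ : ℤ) + j + 1 = ℓ + (j + 1) by ring, show (ℓ : ℤ) + j - 1 = ℓ + (j - 1) by ring] at h
  simp only [pathWeight]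
  push_cast at h
  linear_combination h

lemma pathWeight_add_two (ℓ : ℕ) (j : ℤ) :
    ((ℓ : R) + 2 - j) * ((ℓ : R) + 2 + j) * pathWeight a b c (ℓ + 2) j =
      b * ((ℓ : R) + 2) * (2 * ℓ + 3) * pathWeight a b c (ℓ + 1) j -
        (b ^ 2 - 4 * a * c) * ((ℓ : R) + 1) * ((ℓ : R) + 2) * pathWeight a b c ℓ j := by
  have h1 := pathWeight_contiguous a b c ℓ (j + 1)
  have h0 := pathWeight_contiguous a b c ℓ j
  have h2 := pathWeight_contiguous a b c ℓ (j - 1)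
  rw [pathWeight_succ a b c (ℓ + 1) j, pathWeight_succ a b c ℓ (j + 1), pathWeight_succ a b c ℓ j,
    pathWeight_succ a b c ℓ (j - 1)]
  simp only [add_sub_cancel_right, sub_add_cancel, Int.cast_add, Int.cast_sub, Int.cast_one]
    at h1 h2 ⊢
  linear_combination a * ((ℓ : R) + 2 - j) * h1 - b * j * h0 - c * ((ℓ : R) + 2 + j) * h2

lemma pathWeight_add_four (ℓ : ℕ) (j : ℤ) :
    ((ℓ : R) + 4 - j) * ((ℓ : R) + 4 + j) * ((ℓ : R) + 3 - j) * ((ℓ : R) + 3 + j) * (2 * ℓ + 3) *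
        pathWeight a b c (ℓ + 4) j =
      -(b ^ 2 - 4 * a * c) ^ 2 * ((ℓ : R) + 1) * ((ℓ : R) + 2) * ((ℓ : R) + 3) * ((ℓ : R) + 4) *
          (2 * ℓ + 7) * pathWeight a b c ℓ j +
        ((ℓ : R) + 3) * ((ℓ : R) + 4) * (2 * ℓ + 5) *
          (b ^ 2 * (2 * ℓ + 3) * (2 * ℓ + 7) -
            (b ^ 2 - 4 * a * c) * (2 * ℓ ^ 2 + 10 * ℓ + 11 - 2 * j ^ 2)) *
          pathWeight a b c (ℓ + 2) j := by
  have h2 := pathWeight_add_two a b c (ℓ + 2) j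
  have h1 := pathWeight_add_two a b c (ℓ + 1) j
  have h0 := pathWeight_add_two a b c ℓ j
  push_cast at h1 h2
  -- Eliminating `w_{ℓ+1}` requires dividing by its coefficient `b (ℓ + 2) (2ℓ + 3)`, but the
  -- resulting multipliers are polynomial.
  linear_combination (2 * (ℓ : R) + 3) * ((ℓ : R) + 3 - j) * ((ℓ : R) + 3 + j) * h2 +
    (2 * (ℓ : R) + 3) * b * ((ℓ : R) + 4) * (2 * ℓ + 7) * h1 +
    (b ^ 2 - 4 * a * c) * ((ℓ : R) + 3) * ((ℓ : R) + 4) * (2 * ℓ + 7) * h0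

end PathWeight

lemma amp_eq_pathWeight (ℓ : ℕ) (j : ℤ) (hj : j.natAbs ≤ ℓ) :
    amp ℓ j = pathWeight (I / 2) (1 - I) (I / 2) ℓ j := by
  rw [amp, if_pos hj, pathWeight, intCoeff, if_pos (by omega), coeff_trinomial_symm_pow]
  symm
  rw [← sum_subset (range_subset_range.mpr (by omega : ℓ - j.natAbs + 1 ≤ ℓ + 1))]
  · refine sum_congr rfl fun r hr => ?_
    rw [mem_range] at hr
    by_cases h2 : 2 ∣ (ℓ : ℤ) - r + j
    · rw [if_pos h2, if_pos (by omega),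
        show (((ℓ : ℤ) - r + j) / 2).toNat = ((ℓ + j).toNat - r) / 2 by omega]
    · rw [if_neg h2, if_neg (by omega)]
  · intro r hr hr'
    simp only [mem_range] at hr hr'
    split_ifs with h
    · have : (ℓ - r).choose (((ℓ + j).toNat - r) / 2) = 0 :=
        Nat.choose_eq_zero_of_lt (by omega)
      simp [this]
    · rfl

lemma amp_add_four (ℓ : ℕ) (j : ℤ) (hj : j.natAbs ≤ ℓ) :
    ((ℓ : ℂ) + 4 - j) * ((ℓ : ℂ) + 4 + j) * ((ℓ : ℂ) + 3 - j) * ((ℓ : ℂ) + 3 + j) * (2 * ℓ + 3) *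
        amp (ℓ + 4) j =
      (3 + 4 * I) * ((ℓ : ℂ) + 1) * ((ℓ : ℂ) + 2) * ((ℓ : ℂ) + 3) * ((ℓ : ℂ) + 4) * (2 * ℓ + 7) *
          amp ℓ j -
        ((ℓ : ℂ) + 3) * ((ℓ : ℂ) + 4) * (2 * ℓ + 5) *
          ((2 * ℓ ^ 2 - 2 * j ^ 2 + 10 * ℓ + 11) + 4 * I * (ℓ ^ 2 + j ^ 2 + 5 * ℓ + 5)) *
          amp (ℓ + 2) j := by
  have h := pathWeight_add_four (I / 2) (1 - I) (I / 2) ℓ j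
  rw [← amp_eq_pathWeight ℓ j hj, ← amp_eq_pathWeight (ℓ + 2) j (by omega),
    ← amp_eq_pathWeight (ℓ + 4) j (by omega)] at h
  linear_combination h + (((ℓ : ℂ) + 3) * ((ℓ : ℂ) + 4) * (2 * ℓ + 5) * (2 * ℓ + 3) * (2 * ℓ + 7) *
      amp (ℓ + 2) j - 4 * ((ℓ : ℂ) + 1) * ((ℓ : ℂ) + 2) * ((ℓ : ℂ) + 3) * ((ℓ : ℂ) + 4) *
      (2 * ℓ + 7) * amp ℓ j) * I_sq

/-- Second order linear recursions in `ℓ` (with `j` fixed) for `μ_ℓ(j)`,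
obtained by Zeilberger's algorithm. -/
theorem amp_recursion (n : ℕ) :
    (∀ j : ℤ, j.natAbs ≤ 2 * n →
      amp (2 * n + 4) j =
        (3 + 4 * Complex.I) *
            (((n : ℂ) + 1) * ((n : ℂ) + 2) * ((n : ℂ) + 1 / 2) * ((n : ℂ) + 3 / 2) *
              ((n : ℂ) + 7 / 4)) /
            (((n : ℂ) - (j : ℂ) / 2 + 2) * ((n : ℂ) + (j : ℂ) / 2 + 2) *
              ((n : ℂ) - (j : ℂ) / 2 + 3 / 2) * ((n : ℂ) + (j : ℂ) / 2 + 3 / 2) *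
              ((n : ℂ) + 3 / 4)) * amp (2 * n) j -
          (2 + 4 * Complex.I) *
            (((n : ℂ) + 2) * ((n : ℂ) + 3 / 2) * ((n : ℂ) + 5 / 4) *
              ((n : ℂ) ^ 2 + 3 / 20 * (j : ℂ) ^ 2 + 5 / 2 * (n : ℂ) + 51 / 40 +
                Complex.I * (4 / 20 * (j : ℂ) ^ 2 - 1 / 20))) /
            (((n : ℂ) - (j : ℂ) / 2 + 2) * ((n : ℂ) + (j : ℂ) / 2 + 2) *
              ((n : ℂ) - (j : ℂ) / 2 + 3 / 2) * ((n : ℂ) + (j : ℂ) / 2 + 3 / 2) *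
              ((n : ℂ) + 3 / 4)) * amp (2 * n + 2) j) ∧
    (∀ j : ℤ, j.natAbs ≤ 2 * n + 1 →
      amp (2 * n + 5) j =
        (3 + 4 * Complex.I) *
            (((n : ℂ) + 1) * ((n : ℂ) + 2) * ((n : ℂ) + 3 / 2) * ((n : ℂ) + 5 / 2) *
              ((n : ℂ) + 9 / 4)) /
            (((n : ℂ) - (j : ℂ) / 2 + 2) * ((n : ℂ) + (j : ℂ) / 2 + 2) *
              ((n : ℂ) - (j : ℂ) / 2 + 5 / 2) * ((n : ℂ) + (j : ℂ) / 2 + 5 / 2) *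
              ((n : ℂ) + 5 / 4)) * amp (2 * n + 1) j -
          (2 + 4 * Complex.I) *
            (((n : ℂ) + 2) * ((n : ℂ) + 5 / 2) * ((n : ℂ) + 7 / 4) *
              ((n : ℂ) ^ 2 + 3 / 20 * (j : ℂ) ^ 2 + 7 / 2 * (n : ℂ) + 111 / 40 +
                Complex.I * (4 / 20 * (j : ℂ) ^ 2 - 1 / 20))) /
            (((n : ℂ) - (j : ℂ) / 2 + 2) * ((n : ℂ) + (j : ℂ) / 2 + 2) *
              ((n : ℂ) - (j : ℂ) / 2 + 5 / 2) * ((n : ℂ) + (j : ℂ) / 2 + 5 / 2) *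
              ((n : ℂ) + 5 / 4)) * amp (2 * n + 3) j) := by
  refine ⟨fun j hj => ?_, fun j hj => ?_⟩
  · have h := amp_add_four (2 * n) j (by omega)
    push_cast at h
    have hj' : (j : ℝ) ≤ 2 * n ∧ -(2 * n : ℝ) ≤ j := by constructor <;> norm_cast <;> omega
    rw [div_mul_eq_mul_div, div_mul_eq_mul_div, div_sub_div_same, eq_div_iff (by
      refine mul_ne_zero (mul_ne_zero (mul_ne_zero (mul_ne_zero ?_ ?_) ?_) ?_) ?_ <;>
        exact ne_zero_of_re_pos (by norm_num; linarith))]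
    linear_combination (1 / 64 : ℂ) * h +
      (4 * ((n : ℂ) + 2) * ((n : ℂ) + 3 / 2) * ((n : ℂ) + 5 / 4) *
        (4 / 20 * (j : ℂ) ^ 2 - 1 / 20)) * amp (2 * n + 2) j * I_sq
  · have h := amp_add_four (2 * n + 1) j (by omega)
    push_cast at h
    have hj' : (j : ℝ) ≤ 2 * n + 1 ∧ -(2 * n + 1 : ℝ) ≤ j := by
      constructor <;> norm_cast <;> omega
    rw [div_mul_eq_mul_div, div_mul_eq_mul_div, div_sub_div_same, eq_div_iff (by
      refine mul_ne_zero (mul_ne_zero (mul_ne_zero (mul_ne_zero ?_ ?_) ?_) ?_) ?_ <;>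
        exact ne_zero_of_re_pos (by norm_num; linarith))]
    linear_combination (1 / 64 : ℂ) * h +
      (4 * ((n : ℂ) + 2) * ((n : ℂ) + 5 / 2) * ((n : ℂ) + 7 / 4) *
        (4 / 20 * (j : ℂ) ^ 2 - 1 / 20)) * amp (2 * n + 3) j * I_sq
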